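/- For every n ≥ 1 there exists a tuple P of n points in [0,1]^2 that attains the minimal L∞ star discrepancy among all n-point tuples in [0,1]^2 and such that the smallest first coordinate among the points of P equals d*(P) and the smallest second coordinate among the points of P equals d*(P). -/

import Mathlib

open Finset

noncomputable section

open scoped Classical

/-- Number of points of the tuple `P` lying in the open anchored box `[0,q)`. -/
def openCount {n d : ℕ} (P : Fin n → Fin d → ℝ) (q : Fin d → ℝ) : ℕ :=
  (Finset.univ.filter (fun i : Fin n => ∀ j, P i j < q j)).card

/-- Number of points of the tuple `P` lying in the closed anchored box `[0,q]`. -/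
def closedCount {n d : ℕ} (P : Fin n → Fin d → ℝ) (q : Fin d → ℝ) : ℕ :=
  (Finset.univ.filter (fun i : Fin n => ∀ j, P i j ≤ q j)).card

/-- Open local discrepancy `δ(P,q) = ∏ q_j − #{i : x⁽ⁱ⁾ ∈ [0,q)}/n`. -/
def openDisc {n d : ℕ} (P : Fin n → Fin d → ℝ) (q : Fin d → ℝ) : ℝ :=
  (∏ j, q j) - (openCount P q : ℝ) / n

/-- Closed local discrepancy `δ̄(P,q) = #{i : x⁽ⁱ⁾ ∈ [0,q]}/n − ∏ q_j`. -/
def closedDisc {n d : ℕ} (P : Fin n → Fin d → ℝ) (q : Fin d → ℝ) : ℝ :=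
  (closedCount P q : ℝ) / n - ∏ j, q j

/-- `max(δ(P,q), δ̄(P,q))`. -/
def localDisc {n d : ℕ} (P : Fin n → Fin d → ℝ) (q : Fin d → ℝ) : ℝ :=
  max (openDisc P q) (closedDisc P q)

/-- The L∞ star discrepancy `d*(P) = sup_{q ∈ [0,1]^d} max(δ(P,q), δ̄(P,q))`. -/
def starDisc {n d : ℕ} (P : Fin n → Fin d → ℝ) : ℝ :=
  sSup {r : ℝ | ∃ q : Fin d → ℝ, (∀ j, q j ∈ Set.Icc (0:ℝ) 1) ∧ r = localDisc P q}

/-!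
Moving every point by at most `ε` in each coordinate changes `d*` by at most `d ε`, so `d*` is
continuous on the compact cube `([0,1]^d)^n` and has a minimiser `Q`. With `t = d*(Q)`, raise
every coordinate of `Q` below `t` up to `t`. A box `[0,q)` or `[0,q]` with all `q_j` beyond `t`
contains the same points as before; any other box contains no raised point, so its open local
discrepancy is at most its volume `≤ t` and its closed one is at most `0`. Hence the raised tuple
is still optimal.
Finally, if `m` is the smallest `j`-th coordinate, the box `[0,m) × [0,1)^(d-1)` is empty and has
volume `m`, so `m ≤ d*`.
-/

def unitCube (n d : ℕ) : Set (Fin n → Fin d → ℝ) :=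
  {P | ∀ i j, P i j ∈ Set.Icc (0:ℝ) 1}

theorem isCompact_unitCube (n d : ℕ) : IsCompact (unitCube n d) := by
  have : unitCube n d = Set.univ.pi fun _ => Set.univ.pi fun _ => Set.Icc 0 1 := by
    ext P
    simp only [Set.mem_univ_pi]
    rfl
  rw [this]
  exact isCompact_univ_pi fun _ => isCompact_univ_pi fun _ => isCompact_Icc

theorem Finset.prod_sub_prod_le_sum_sub {ι : Type*} (s : Finset ι) {a b : ι → ℝ}
    (hb : ∀ i ∈ s, 0 ≤ b i) (hba : ∀ i ∈ s, b i ≤ a i) (ha : ∀ i ∈ s, a i ≤ 1) :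
    ∏ i ∈ s, a i - ∏ i ∈ s, b i ≤ ∑ i ∈ s, (a i - b i) := by
  induction s using Finset.cons_induction with
  | empty => simp
  | cons k s hk ih =>
    simp only [Finset.forall_mem_cons] at hb hba ha
    have hB0 : 0 ≤ ∏ i ∈ s, b i := Finset.prod_nonneg hb.2
    have hB1 : ∏ i ∈ s, b i ≤ 1 := Finset.prod_le_one hb.2 fun i hi => (hba.2 i hi).trans (ha.2 i hi)
    have hAB : ∏ i ∈ s, b i ≤ ∏ i ∈ s, a i := Finset.prod_le_prod hb.2 hba.2
    rw [Finset.prod_cons, Finset.prod_cons, Finset.sum_cons]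
    nlinarith [ih hb.2 hba.2 ha.2]

section Discrepancy

variable {n d : ℕ} {P P' : Fin n → Fin d → ℝ} {q q' : Fin d → ℝ}

theorem openCount_le_openCount (h : ∀ i, (∀ j, P i j < q j) → ∀ j, P' i j < q' j) :
    openCount P q ≤ openCount P' q' :=
  Finset.card_le_card <| Finset.monotone_filter_right _ fun i _ => h i

theorem closedCount_le_closedCount (h : ∀ i, (∀ j, P i j ≤ q j) → ∀ j, P' i j ≤ q' j) :
    closedCount P q ≤ closedCount P' q' :=
  Finset.card_le_card <| Finset.monotone_filter_right _ fun i _ => h i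

theorem openDisc_le_prod (P : Fin n → Fin d → ℝ) (q : Fin d → ℝ) : openDisc P q ≤ ∏ j, q j :=
  sub_le_self _ (by positivity)

theorem localDisc_le_one (hn : 0 < n) (P : Fin n → Fin d → ℝ) (hq : ∀ j, q j ∈ Set.Icc (0:ℝ) 1) :
    localDisc P q ≤ 1 := by
  have hprod0 : 0 ≤ ∏ j, q j := Finset.prod_nonneg fun j _ => (hq j).1
  have hprod1 : ∏ j, q j ≤ 1 := Finset.prod_le_one (fun j _ => (hq j).1) fun j _ => (hq j).2
  have hcount : (closedCount P q : ℝ) / n ≤ 1 := by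
    rw [div_le_one (by exact_mod_cast hn)]
    exact_mod_cast (Finset.card_filter_le _ _).trans_eq (Finset.card_fin n)
  refine max_le ((openDisc_le_prod P q).trans hprod1) ?_
  rw [closedDisc]
  linarith

theorem localDisc_le_starDisc (hn : 0 < n) (P : Fin n → Fin d → ℝ)
    (hq : ∀ j, q j ∈ Set.Icc (0:ℝ) 1) : localDisc P q ≤ starDisc P :=
  le_csSup ⟨1, by rintro r ⟨q, hq, rfl⟩; exact localDisc_le_one hn P hq⟩ ⟨q, hq, rfl⟩

theorem starDisc_le_of_forall {c : ℝ}
    (h : ∀ q : Fin d → ℝ, (∀ j, q j ∈ Set.Icc (0:ℝ) 1) → localDisc P q ≤ c) : starDisc P ≤ c :=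
  csSup_le ⟨_, 0, fun _ => ⟨le_rfl, zero_le_one⟩, rfl⟩ <| by
    rintro r ⟨q, hq, rfl⟩
    exact h q hq

theorem starDisc_le_one (hn : 0 < n) (P : Fin n → Fin d → ℝ) : starDisc P ≤ 1 :=
  starDisc_le_of_forall fun _ => localDisc_le_one hn P

theorem le_starDisc_of_forall_le (hn : 0 < n) (j : Fin d) {m : ℝ} (hm : m ∈ Set.Icc (0:ℝ) 1)
    (h : ∀ i, m ≤ P i j) : m ≤ starDisc P := by
  set q : Fin d → ℝ := Pi.mulSingle j m
  have hq : ∀ k, q k ∈ Set.Icc (0:ℝ) 1 := by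
    intro k
    rcases eq_or_ne k j with rfl | hk
    · simpa [q] using hm
    · simp [q, Pi.mulSingle_eq_of_ne hk]
  have hcount : openCount P q = 0 := by
    refine Finset.card_eq_zero.2 <| Finset.filter_eq_empty_iff.2 fun i _ hi => ?_
    exact (hi j).not_ge (by simpa [q] using h i)
  calc m = openDisc P q := by
        simp [openDisc, hcount, q, Finset.prod_pi_mulSingle']
    _ ≤ localDisc P q := le_max_left _ _
    _ ≤ starDisc P := localDisc_le_starDisc hn P hq

theorem sInf_range_le_starDisc (hn : 0 < n) (hP : P ∈ unitCube n d) (j : Fin d) :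
    sInf (Set.range fun i => P i j) ≤ starDisc P := by
  have : Nonempty (Fin n) := ⟨⟨0, hn⟩⟩
  have hbdd : BddBelow (Set.range fun i => P i j) := (Set.finite_range _).bddBelow
  refine le_starDisc_of_forall_le hn j ⟨le_ciInf fun i => (hP i j).1, ?_⟩ fun i => ciInf_le hbdd i
  exact (ciInf_le hbdd ⟨0, hn⟩).trans (hP _ j).2

theorem prod_sub_prod_le_card_mul {ε : ℝ} (hq : ∀ j, q j ∈ Set.Icc (0:ℝ) 1)
    (hq' : ∀ j, 0 ≤ q' j ∧ q' j ≤ q j ∧ q j - q' j ≤ ε) :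
    ∏ j, q j - ∏ j, q' j ≤ d * ε :=
  calc ∏ j, q j - ∏ j, q' j ≤ ∑ j, (q j - q' j) :=
        Finset.prod_sub_prod_le_sum_sub _ (fun j _ => (hq' j).1) (fun j _ => (hq' j).2.1)
          fun j _ => (hq j).2
    _ ≤ ∑ _j : Fin d, ε := Finset.sum_le_sum fun j _ => (hq' j).2.2
    _ = d * ε := by simp

section Lipschitz

variable {ε : ℝ} (hn : 0 < n) (hP' : P' ∈ unitCube n d) (hε : 0 ≤ ε)
  (hPP' : ∀ i j, |P i j - P' i j| ≤ ε) (hq : ∀ j, q j ∈ Set.Icc (0:ℝ) 1)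
include hn hP' hε hPP' hq

/-- Compare with the box shrunk by `ε` in every direction. -/
theorem openDisc_le_starDisc_add : openDisc P q ≤ starDisc P' + d * ε := by
  set q' : Fin d → ℝ := fun k => max (q k - ε) 0
  have hq' : ∀ k, q' k ∈ Set.Icc (0:ℝ) 1 :=
    fun k => ⟨le_max_right _ _, max_le (by linarith [(hq k).2]) zero_le_one⟩
  have hcount : openCount P' q' ≤ openCount P q := by
    refine openCount_le_openCount fun i hi k => ?_
    have hlt : P' i k < q k - ε := (lt_max_iff.1 (hi k)).resolve_right (hP' i k).1.not_gt
    linarith [(abs_le.1 (hPP' i k)).2]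
  have hprod : ∏ k, q k - ∏ k, q' k ≤ d * ε := prod_sub_prod_le_card_mul hq fun k =>
    ⟨le_max_right _ _, max_le (by linarith) (hq k).1, by linarith [le_max_left (q k - ε) 0]⟩
  have hdiv : (openCount P' q' : ℝ) / n ≤ openCount P q / n := by gcongr
  calc openDisc P q ≤ openDisc P' q' + d * ε := by rw [openDisc, openDisc]; linarith
    _ ≤ starDisc P' + d * ε := by
      gcongr
      exact (le_max_left _ _).trans (localDisc_le_starDisc hn P' hq')

/-- Compare with the box enlarged by `ε` in every direction. -/
theorem closedDisc_le_starDisc_add : closedDisc P q ≤ starDisc P' + d * ε := by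
  set q' : Fin d → ℝ := fun k => min (q k + ε) 1
  have hq' : ∀ k, q' k ∈ Set.Icc (0:ℝ) 1 :=
    fun k => ⟨le_min (by linarith [(hq k).1]) zero_le_one, min_le_right _ _⟩
  have hcount : closedCount P q ≤ closedCount P' q' := by
    refine closedCount_le_closedCount fun i hi k => le_min ?_ (hP' i k).2
    linarith [hi k, (abs_le.1 (hPP' i k)).1]
  have hprod : ∏ k, q' k - ∏ k, q k ≤ d * ε := prod_sub_prod_le_card_mul hq' fun k =>
    ⟨(hq k).1, le_min (by linarith) (hq k).2, by linarith [min_le_left (q k + ε) 1]⟩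
  have hdiv : (closedCount P q : ℝ) / n ≤ closedCount P' q' / n := by gcongr
  calc closedDisc P q ≤ closedDisc P' q' + d * ε := by rw [closedDisc, closedDisc]; linarith
    _ ≤ starDisc P' + d * ε := by
      gcongr
      exact (le_max_right _ _).trans (localDisc_le_starDisc hn P' hq')

end Lipschitz

theorem starDisc_le_starDisc_add {ε : ℝ} (hn : 0 < n) (hP' : P' ∈ unitCube n d) (hε : 0 ≤ ε)
    (hPP' : ∀ i j, |P i j - P' i j| ≤ ε) : starDisc P ≤ starDisc P' + d * ε :=
  starDisc_le_of_forall fun _ hq => max_le (openDisc_le_starDisc_add hn hP' hε hPP' hq)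
    (closedDisc_le_starDisc_add hn hP' hε hPP' hq)

theorem lipschitzOnWith_starDisc (hn : 0 < n) :
    LipschitzOnWith d (starDisc : (Fin n → Fin d → ℝ) → ℝ) (unitCube n d) := by
  refine LipschitzOnWith.of_dist_le_mul fun P hP P' hP' => ?_
  have hdist : ∀ i j, |P i j - P' i j| ≤ dist P P' := fun i j =>
    (dist_le_pi_dist (P i) (P' i) j).trans (dist_le_pi_dist P P' i)
  have hdist' : ∀ i j, |P' i j - P i j| ≤ dist P P' := fun i j => abs_sub_comm (P i j) _ ▸ hdist i j
  rw [Real.dist_eq, abs_sub_le_iff, NNReal.coe_natCast]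
  exact ⟨by linarith [starDisc_le_starDisc_add hn hP' dist_nonneg hdist],
    by linarith [starDisc_le_starDisc_add hn hP dist_nonneg hdist']⟩

theorem exists_isMinOn_starDisc (hn : 0 < n) :
    ∃ Q ∈ unitCube n d, IsMinOn starDisc (unitCube n d) Q :=
  (isCompact_unitCube n d).exists_isMinOn ⟨0, fun _ _ => ⟨le_rfl, zero_le_one⟩⟩
    (lipschitzOnWith_starDisc hn).continuousOn

theorem starDisc_max_const_le (hn : 0 < n) (Q : Fin n → Fin d → ℝ) {t : ℝ} (ht : 0 ≤ t) :
    starDisc (fun i j => max (Q i j) t) ≤ max (starDisc Q) t := by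
  refine starDisc_le_of_forall fun q hq => max_le ?_ ?_
  · by_cases hbig : ∀ j, t < q j
    · have hcount : openCount (fun i j => max (Q i j) t) q = openCount Q q := by
        simp only [openCount, max_lt_iff, hbig, and_true]
      rw [openDisc, hcount, ← openDisc]
      exact le_max_of_le_left <| (le_max_left _ _).trans (localDisc_le_starDisc hn Q hq)
    · push Not at hbig
      obtain ⟨j, hj⟩ := hbig
      calc openDisc _ q ≤ ∏ k, q k := openDisc_le_prod _ q
        _ ≤ ∏ k ∈ {j}, q k := Finset.prod_le_prod_of_subset_of_le_one (Finset.subset_univ _)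
            (fun k _ => (hq k).1) fun k _ _ => (hq k).2
        _ ≤ max (starDisc Q) t := by simpa using Or.inr hj
  · by_cases hbig : ∀ j, t ≤ q j
    · have hcount : closedCount (fun i j => max (Q i j) t) q = closedCount Q q := by
        simp only [closedCount, max_le_iff, hbig, and_true]
      rw [closedDisc, hcount, ← closedDisc]
      exact le_max_of_le_left <| (le_max_right _ _).trans (localDisc_le_starDisc hn Q hq)
    · push Not at hbig
      obtain ⟨j, hj⟩ := hbig
      have hcount : closedCount (fun i j => max (Q i j) t) q = 0 :=
        Finset.card_eq_zero.2 <| Finset.filter_eq_empty_iff.2 fun i _ hi =>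
          (hi j).not_gt (hj.trans_le (le_max_right _ _))
      have hprod : 0 ≤ ∏ k, q k := Finset.prod_nonneg fun k _ => (hq k).1
      rw [closedDisc, hcount]
      simp only [Nat.cast_zero, zero_div]
      exact le_max_of_le_right (by linarith)

end Discrepancy

/-- For every `n ≥ 1` there is an optimal `n`-point tuple in `[0,1]²` whose
smallest first coordinate and smallest second coordinate both equal `d*(P)`. -/
theorem stmt_12 (n : ℕ) (hn : 1 ≤ n) :
    ∃ P : Fin n → Fin 2 → ℝ, (∀ i j, P i j ∈ Set.Icc (0:ℝ) 1) ∧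
      (∀ Q : Fin n → Fin 2 → ℝ, (∀ i j, Q i j ∈ Set.Icc (0:ℝ) 1) → starDisc P ≤ starDisc Q) ∧
      sInf (Set.range (fun i => P i 0)) = starDisc P ∧
      sInf (Set.range (fun i => P i 1)) = starDisc P := by
  have : Nonempty (Fin n) := ⟨⟨0, hn⟩⟩
  obtain ⟨Q, hQ, hQmin⟩ := exists_isMinOn_starDisc (d := 2) hn
  set t := starDisc Q
  have ht0 : 0 ≤ t := le_starDisc_of_forall_le hn 0 ⟨le_rfl, zero_le_one⟩ fun i => (hQ i 0).1
  set P : Fin n → Fin 2 → ℝ := fun i j => max (Q i j) t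
  have hP : P ∈ unitCube n 2 :=
    fun i j => ⟨ht0.trans (le_max_right _ _), max_le (hQ i j).2 (starDisc_le_one hn Q)⟩
  have hPt : starDisc P = t :=
    le_antisymm ((starDisc_max_const_le hn Q ht0).trans_eq (max_self t)) (hQmin hP)
  have hmin : ∀ j, sInf (Set.range fun i => P i j) = starDisc P := fun j =>
    le_antisymm (sInf_range_le_starDisc hn hP j) (hPt ▸ le_ciInf fun i => le_max_right _ _)
  exact ⟨P, hP, fun R hR => hPt ▸ hQmin hR, hmin 0, hmin 1⟩
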